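/- arXiv:2105.00054 — 6 statements merged into one kernel-verified Lean document; each statement's English description precedes it below -/
import Mathlib

section
/- Let h : [0,1] → [0,1] be strictly increasing with h(0)=0, h(1)=1, and suppose h is twice continuously differentiable at p₀ ∈ (0,1) with h'(p₀) > 0. For each small ε₁ > 0 let μ(ε₁) be the unique solution of h(p₀−ε₁) − 2h(p₀−μ) + h(p₀+ε₁) = 0. Then μ(ε₁) = −(1/2)·ε₁²·h''(p₀)/h'(p₀) + o(ε₁²) as ε₁ → 0⁺. -/
open Set Filter Asymptotics Topology

/-!
Expanding `h` to second order at `p₀`, with remainder `R t = o(t²)`, turns the indifference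
equation into `2 h'(p₀) μ + h''(p₀) ε² = h''(p₀) μ² + 2 R(-μ) - R(-ε) - R(ε)`.
Since `|μ| ≤ ε`, the right-hand side is `o(ε)`, so `μ = o(ε)`; then `μ² = o(ε²)` and the
right-hand side is in fact `o(ε²)`.
-/

theorem ContDiffAt.isLittleO_taylor_two {f : ℝ → ℝ} {x₀ : ℝ} (hf : ContDiffAt ℝ 2 f x₀) :
    (fun t => f (x₀ + t) - f x₀ - deriv f x₀ * t - deriv (deriv f) x₀ / 2 * t ^ 2)
      =o[𝓝 0] fun t => t ^ 2 := by
  obtain ⟨u, hu, hfu⟩ := hf.contDiffOn le_rfl (by simp)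
  obtain ⟨r, hr, hball⟩ := Metric.mem_nhds_iff.1 hu
  have hx₀ : x₀ ∈ Metric.ball x₀ r := Metric.mem_ball_self hr
  have htaylor := taylor_isLittleO (convex_ball x₀ r) hx₀ (hfu.mono hball)
  rw [Metric.isOpen_ball.nhdsWithin_eq hx₀] at htaylor
  have hshift : Tendsto (fun t => x₀ + t) (𝓝 0) (𝓝 x₀) := by
    simpa using (continuous_const_add x₀).tendsto 0
  refine (htaylor.comp_tendsto hshift).congr (fun t => ?_) (fun t => by simp)
  simp [taylor_within_apply, iteratedDerivWithin_of_isOpen Metric.isOpen_ball hx₀,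
    iteratedDeriv_succ]
  ring

theorem isLittleO_sq_of_linear_eq_quadratic {α : Type*} {l : Filter α} {μ ε E F : α → ℝ}
    {a b c : ℝ} (ha : a ≠ 0) (hε : Tendsto ε l (𝓝 0)) (hμ : μ =O[l] ε)
    (hE : E =o[l] fun x => μ x ^ 2) (hF : F =o[l] fun x => ε x ^ 2)
    (heq : ∀ᶠ x in l, a * μ x + b * ε x ^ 2 = c * μ x ^ 2 + E x + F x) :
    (fun x => a * μ x + b * ε x ^ 2) =o[l] fun x => ε x ^ 2 := by
  have sq_isLittleO {f : α → ℝ} (hf : f =O[l] ε) : (fun x => f x ^ 2) =o[l] ε := by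
    simpa [sq] using hf.mul_isLittleO ((isLittleO_one_iff ℝ).2 (hf.trans_tendsto hε))
  have hμ2 := sq_isLittleO hμ
  have hε2 := sq_isLittleO (isBigO_refl ε l)
  have hμε : μ =o[l] ε := by
    refine (isLittleO_const_mul_left_iff ha).1 ?_
    refine ((((hμ2.const_mul_left c).add (hE.trans hμ2)).add (hF.trans hε2)).sub
      (hε2.const_mul_left b)).congr' (heq.mono fun x hx => ?_) EventuallyEq.rfl
    beta_reduce
    linarith
  have hμε2 : (fun x => μ x ^ 2) =o[l] fun x => ε x ^ 2 := hμε.pow two_pos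
  exact (((hμε2.const_mul_left c).add (hE.trans hμε2)).add hF).congr'
    (heq.mono fun x hx => hx.symm) EventuallyEq.rfl

theorem stmt_1_general (h : ℝ → ℝ)
    (p₀ : ℝ)
    (hC2 : ContDiffAt ℝ 2 h p₀)
    (hd : 0 < deriv h p₀)
    (μ : ℝ → ℝ) (δ : ℝ) (hδ : 0 < δ)
    (hμbd : ∀ ε₁ ∈ Ioo (0:ℝ) δ, μ ε₁ ∈ Icc (-ε₁) ε₁)
    (hμeq : ∀ ε₁ ∈ Ioo (0:ℝ) δ,
      h (p₀ - ε₁) - 2 * h (p₀ - μ ε₁) + h (p₀ + ε₁) = 0) :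
    (fun ε₁ => μ ε₁ - (-(1/2) * ε₁^2 * deriv (deriv h) p₀ / deriv h p₀))
      =o[nhdsWithin 0 (Ioi 0)] (fun ε₁ => ε₁^2) := by
  set a := deriv h p₀
  set b := deriv (deriv h) p₀
  set R := fun t => h (p₀ + t) - h p₀ - a * t - b / 2 * t ^ 2 with hR_def
  have hR : R =o[𝓝 0] fun t => t ^ 2 := hC2.isLittleO_taylor_two
  have hsmall : ∀ᶠ ε in 𝓝[>] (0:ℝ), ε ∈ Ioo 0 δ := Ioo_mem_nhdsGT hδ
  have hε : Tendsto (fun ε => ε) (𝓝[>] (0:ℝ)) (𝓝 0) := nhdsWithin_le_nhds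
  have hμ : μ =O[𝓝[>] 0] fun ε => ε := IsBigO.of_bound 1 <| hsmall.mono fun ε hε => by
    simpa [abs_le, abs_of_pos hε.1] using hμbd ε hε
  have hμ0 : Tendsto (fun ε => -μ ε) (𝓝[>] 0) (𝓝 0) := by
    simpa using (hμ.trans_tendsto hε).neg
  have hRμ : (fun ε => 2 * R (-μ ε)) =o[𝓝[>] 0] fun ε => μ ε ^ 2 := by
    simpa [Function.comp_def] using (hR.comp_tendsto hμ0).const_mul_left 2
  have hRε : (fun ε => -(R (-ε) + R ε)) =o[𝓝[>] 0] fun ε => ε ^ 2 := by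
    have hεneg : Tendsto (fun ε => -ε) (𝓝[>] (0:ℝ)) (𝓝 0) := by simpa using hε.neg
    have hRneg : (fun ε => R (-ε)) =o[𝓝[>] 0] fun ε => ε ^ 2 := by
      simpa [Function.comp_def] using hR.comp_tendsto hεneg
    exact (hRneg.add (hR.comp_tendsto hε)).neg_left
  have heq : ∀ᶠ ε in 𝓝[>] 0, 2 * a * μ ε + b * ε ^ 2
      = b * μ ε ^ 2 + 2 * R (-μ ε) + -(R (-ε) + R ε) := hsmall.mono fun ε hε => by
    simp only [hR_def, ← sub_eq_add_neg]
    linear_combination hμeq ε hε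
  have key := isLittleO_sq_of_linear_eq_quadratic (by positivity) hε hμ hRμ hRε heq
  refine (key.const_mul_left (2 * a)⁻¹).congr (fun ε => ?_) (fun ε => rfl)
  field_simp
  ring

theorem stmt_1 (h : ℝ → ℝ)
    (hmono : StrictMonoOn h (Icc 0 1))
    (hmaps : MapsTo h (Icc 0 1) (Icc 0 1))
    (h0 : h 0 = 0) (h1 : h 1 = 1)
    (p₀ : ℝ) (hp₀ : p₀ ∈ Ioo (0:ℝ) 1)
    (hC2 : ContDiffAt ℝ 2 h p₀)
    (hd : 0 < deriv h p₀)
    (μ : ℝ → ℝ) (δ : ℝ) (hδ : 0 < δ)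
    (hμbd : ∀ ε₁ ∈ Ioo (0:ℝ) δ, μ ε₁ ∈ Icc (-ε₁) ε₁)
    (hμeq : ∀ ε₁ ∈ Ioo (0:ℝ) δ,
      h (p₀ - ε₁) - 2 * h (p₀ - μ ε₁) + h (p₀ + ε₁) = 0) :
    (fun ε₁ => μ ε₁ - (-(1/2) * ε₁^2 * deriv (deriv h) p₀ / deriv h p₀))
      =o[nhdsWithin 0 (Ioi 0)] (fun ε₁ => ε₁^2) :=
  stmt_1_general h p₀ hC2 hd μ δ hδ hμbd hμeq
end

section
/- Let U be twice continuously differentiable at w₀ with U'(w₀) > 0, and h twice continuously differentiable at p₀ ∈ (0,1) with h'(p₀) > 0. Let μ(ε₁, ε₂) solve the RDU indifference equation (h(p₀+ε₁)−h(p₀−ε₁))·U(w₀) = (h(p₀−μ)−h(p₀−ε₁))·U(w₀−ε₂) + (h(p₀+ε₁)−h(p₀−μ))·U(w₀+ε₂). Then as (ε₁, ε₂) → (0⁺, 0⁺), μ = −(1/2)·ε₁·ε₂·U''(w₀)/U'(w₀) − (1/2)·ε₁²·h''(p₀)/h'(p₀) + o(ε₁ε₂) + o(ε₁²). -/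
/-!
Expand `h` to second order at `p₀` and `U` to second order at `w₀` in the indifference equation.
After cancelling `U w₀` and dividing by `ε₂`, it becomes
`2 h' U' μ + ε₁ ε₂ h' U'' + ε₁² U' h'' - U' h'' μ² = o(ε₁ ε₂ + ε₁²)`,
the error being controlled by `|μ| ≤ ε₁`. The term `μ²` is then absorbed: the relation first
gives `μ = O(ε₁ ε₂ + ε₁²)`, hence `μ² = o(ε₁ ε₂ + ε₁²)`, and solving for `μ` gives the expansion.
-/

open Set Filter Asymptotics Topology

variable {E : Type*} [NormedAddCommGroup E] [NormedSpace ℝ E]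

noncomputable def secondTaylorRemainder (f : ℝ → E) (x t : ℝ) : E :=
  f (x + t) - f x - t • deriv f x - (t ^ 2 / 2) • deriv (deriv f) x

/-- Only `f'` needs to be differentiable at `x`: the remainder's derivative is then `o(t)`, and the
mean value inequality integrates this to `o(t²)`. -/
theorem isLittleO_secondTaylorRemainder {f : ℝ → E} {x : ℝ}
    (hf : ∀ᶠ y in 𝓝 x, DifferentiableAt ℝ f y) (hf' : DifferentiableAt ℝ (deriv f) x) :
    secondTaylorRemainder f x =o[𝓝 0] fun t => t ^ 2 := by
  obtain ⟨r, hr, hball⟩ := Metric.eventually_nhds_iff_ball.1 hf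
  have hderiv : ∀ y ∈ Metric.ball x r,
      HasDerivWithinAt (fun y => secondTaylorRemainder f x (y - x))
        (deriv f y - deriv f x - (y - x) • deriv (deriv f) x) (Metric.ball x r) y := by
    intro y hy
    have := (((hball y hy).hasDerivAt.sub_const (f x)).sub
      ((hasDerivAt_id y).sub_const x |>.smul_const (deriv f x))).sub
      ((((hasDerivAt_id y).sub_const x).pow 2).div_const 2 |>.smul_const (deriv (deriv f) x))
    refine (this.congr_deriv ?_).hasDerivWithinAt.congr_of_mem ?_ hy
    · simp
    · intro z _
      simp [secondTaylorRemainder]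
  have hderiv_o : (fun y => deriv f y - deriv f x - (y - x) • deriv (deriv f) x)
      =o[𝓝[Metric.ball x r] x] fun y => (y - x) ^ 1 := by
    rw [(Metric.isOpen_ball).nhdsWithin_eq (Metric.mem_ball_self hr)]
    simpa using hasDerivAt_iff_isLittleO.1 hf'.hasDerivAt
  have := (convex_ball x r).isLittleO_pow_succ_real (Metric.mem_ball_self hr) hderiv hderiv_o
  rw [(Metric.isOpen_ball).nhdsWithin_eq (Metric.mem_ball_self hr)] at this
  have hx : Tendsto (fun t : ℝ => x + t) (𝓝 0) (𝓝 x) := by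
    simpa using (continuous_const_add x).tendsto (0 : ℝ)
  refine (this.comp_tendsto hx).congr (fun t => ?_) (fun t => ?_) <;> simp [secondTaylorRemainder]

theorem ContDiffAt.isLittleO_secondTaylorRemainder {f : ℝ → E} {x : ℝ}
    (hf : ContDiffAt ℝ 2 f x) : secondTaylorRemainder f x =o[𝓝 0] fun t => t ^ 2 :=
  _root_.isLittleO_secondTaylorRemainder
    ((hf.eventually (by simp)).mono fun _ hy => hy.differentiableAt (by norm_num))
    ((hf.derivWithin (m := 1) (by norm_num)).differentiableAt one_ne_zero)

section Asymptotics

variable {α : Type*} {l : Filter α}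

theorem Asymptotics.IsLittleO.comp_isBigO_pow {F : Type*} [Norm F]
    {R : ℝ → F} {n : ℕ} (hR : R =o[𝓝 0] fun t => t ^ n) {φ ψ : α → ℝ} (hφ : φ =O[l] ψ)
    (hψ : Tendsto ψ l (𝓝 0)) : (fun a => R (φ a)) =o[l] fun a => ψ a ^ n :=
  (hR.comp_tendsto (hφ.trans_tendsto hψ)).trans_isBigO (hφ.pow n)

theorem Asymptotics.IsBigO.of_sub_mul_sq {𝕜 F : Type*} [NormedField 𝕜] [Norm F]
    {x : α → 𝕜} {g : α → F} {c : 𝕜}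
    (h : (fun a => x a - c * x a ^ 2) =O[l] g) (hx : Tendsto x l (𝓝 0)) : x =O[l] g := by
  have hlim : Tendsto (fun a => (1 - c * x a)⁻¹) l (𝓝 1) := by
    simpa using ((hx.const_mul c).const_sub 1).inv₀ (by simp)
  have hne : ∀ᶠ a in l, 1 - c * x a ≠ 0 :=
    ((hx.const_mul c).const_sub 1).eventually_ne (by simp)
  refine IsBigO.trans ?_ h
  refine (((isBigO_refl (fun a => x a - c * x a ^ 2) l).mul
    (hlim.isBigO_one 𝕜)).congr' ?_ (by simp))
  filter_upwards [hne] with a ha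
  rw [show x a - c * x a ^ 2 = x a * (1 - c * x a) by ring, mul_assoc, mul_inv_cancel₀ ha,
    mul_one]

theorem Asymptotics.IsLittleO.div_of_sq {f ψ : α → ℝ} (h : f =o[l] fun a => ψ a ^ 2) :
    (fun a => f a / ψ a) =o[l] ψ := by
  refine (h.mul_isBigO (isBigO_refl (fun a => (ψ a)⁻¹) l)).congr (fun a => div_eq_mul_inv _ _)
    (fun a => ?_)
  rcases eq_or_ne (ψ a) 0 with h0 | h0
  · simp [h0]
  · field_simp

theorem DifferentiableAt.isBigO_sub_comp {f : ℝ → E} {x : ℝ} (hf : DifferentiableAt ℝ f x)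
    {φ : α → ℝ} (hφ : Tendsto φ l (𝓝 0)) : (fun a => f (x + φ a) - f x) =O[l] φ := by
  have hx : Tendsto (fun a => x + φ a) l (𝓝 x) := by simpa using hφ.const_add x
  simpa [Function.comp_def] using hf.hasDerivAt.isBigO_sub.comp_tendsto hx

theorem isBigO_mul_add_sq {ε₁ ε₂ : α → ℝ} (h₁ : ∀ᶠ a in l, 0 ≤ ε₁ a)
    (h₂ : ∀ᶠ a in l, 0 ≤ ε₂ a) :
    (fun a => ε₁ a * ε₂ a) =O[l] (fun a => ε₁ a * ε₂ a + ε₁ a ^ 2) ∧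
      (fun a => ε₁ a ^ 2) =O[l] (fun a => ε₁ a * ε₂ a + ε₁ a ^ 2) := by
  have hnonneg : ∀ᶠ a in l, 0 ≤ ε₁ a * ε₂ a ∧ 0 ≤ ε₁ a ^ 2 := by
    filter_upwards [h₁, h₂] with a ha hb using ⟨mul_nonneg ha hb, sq_nonneg _⟩
  refine ⟨.of_bound 1 ?_, .of_bound 1 ?_⟩ <;> filter_upwards [hnonneg] with a ⟨hm, hs⟩ <;>
    simp only [one_mul, Real.norm_of_nonneg, hm, hs, add_nonneg] <;> linarith

end Asymptotics

noncomputable def rduRemainder (U h : ℝ → ℝ) (w₀ p₀ ε₁ ε₂ ν : ℝ) : ℝ :=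
  deriv U w₀ * (secondTaylorRemainder h p₀ ε₁ + secondTaylorRemainder h p₀ (-ε₁)
      - 2 * secondTaylorRemainder h p₀ (-ν))
    + ε₂ * deriv (deriv U) w₀ / 2
      * (secondTaylorRemainder h p₀ ε₁ - secondTaylorRemainder h p₀ (-ε₁))
    + (h (p₀ + ε₁) - h (p₀ - ν)) * (secondTaylorRemainder U w₀ ε₂ / ε₂)
    + (h (p₀ - ν) - h (p₀ - ε₁)) * (secondTaylorRemainder U w₀ (-ε₂) / ε₂)

theorem indifference_eq_neg_rduRemainder {U h : ℝ → ℝ} {w₀ p₀ ε₁ ε₂ ν : ℝ} (hε₂ : ε₂ ≠ 0)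
    (heq : (h (p₀ + ε₁) - h (p₀ - ε₁)) * U w₀
      = (h (p₀ - ν) - h (p₀ - ε₁)) * U (w₀ - ε₂) + (h (p₀ + ε₁) - h (p₀ - ν)) * U (w₀ + ε₂)) :
    2 * deriv h p₀ * deriv U w₀ * ν + ε₁ * ε₂ * deriv h p₀ * deriv (deriv U) w₀
        + ε₁ ^ 2 * deriv U w₀ * deriv (deriv h) p₀ - deriv U w₀ * deriv (deriv h) p₀ * ν ^ 2
      = -rduRemainder U h w₀ p₀ ε₁ ε₂ ν := by
  simp only [rduRemainder, secondTaylorRemainder, smul_eq_mul, ← sub_eq_add_neg]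
  field_simp
  linear_combination (-4 : ℝ) * heq

section Expansion

variable {α : Type*} {l : Filter α} {ε₁ ε₂ ν : α → ℝ}

theorem isLittleO_rduRemainder {U h : ℝ → ℝ} {w₀ p₀ : ℝ} (hU : ContDiffAt ℝ 2 U w₀)
    (hh : ContDiffAt ℝ 2 h p₀) (hε₁ : Tendsto ε₁ l (𝓝 0)) (hε₂ : Tendsto ε₂ l (𝓝 0))
    (hε₂_nonneg : ∀ᶠ a in l, 0 ≤ ε₂ a) (hν : ∀ᶠ a in l, |ν a| ≤ ε₁ a) :
    (fun a => rduRemainder U h w₀ p₀ (ε₁ a) (ε₂ a) (ν a))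
      =o[l] fun a => ε₁ a * ε₂ a + ε₁ a ^ 2 := by
  have hε₁_nonneg : ∀ᶠ a in l, 0 ≤ ε₁ a := hν.mono fun a ha => (abs_nonneg _).trans ha
  obtain ⟨hmul, hsq⟩ := isBigO_mul_add_sq hε₁_nonneg hε₂_nonneg
  have hνε₁ : ν =O[l] ε₁ := .of_bound 1 <| by
    filter_upwards [hν, hε₁_nonneg] with a ha h0
    rwa [one_mul, Real.norm_eq_abs, Real.norm_of_nonneg h0]
  have hRh := hh.isLittleO_secondTaylorRemainder
  have hRU := hU.isLittleO_secondTaylorRemainder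
  have hRhpos := hRh.comp_isBigO_pow (isBigO_refl ε₁ l) hε₁
  have hRhneg := hRh.comp_isBigO_pow (isBigO_refl ε₁ l).neg_left hε₁
  have hRhν := hRh.comp_isBigO_pow hνε₁.neg_left hε₁
  have hRUpos := (hRU.comp_isBigO_pow (isBigO_refl ε₂ l) hε₂).div_of_sq
  have hRUneg := (hRU.comp_isBigO_pow (isBigO_refl ε₂ l).neg_left hε₂).div_of_sq
  have hdiff := hh.differentiableAt two_ne_zero
  have hνneg : Tendsto (fun a => -ν a) l (𝓝 0) := by simpa using (hνε₁.trans_tendsto hε₁).neg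
  have hhA := hdiff.isBigO_sub_comp hε₁
  have hhB := (hdiff.isBigO_sub_comp (by simpa using hε₁.neg)).trans (isBigO_refl ε₁ l).neg_left
  have hhM := (hdiff.isBigO_sub_comp hνneg).trans hνε₁.neg_left
  have hAM : (fun a => h (p₀ + ε₁ a) - h (p₀ - ν a)) =O[l] ε₁ :=
    (hhA.sub hhM).congr_left fun a => by simp only [sub_eq_add_neg]; ring
  have hMB : (fun a => h (p₀ - ν a) - h (p₀ - ε₁ a)) =O[l] ε₁ :=
    (hhM.sub hhB).congr_left fun a => by simp only [sub_eq_add_neg]; ring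
  have hsummand₁ := (((hRhpos.add hRhneg).sub (hRhν.const_mul_left 2)).const_mul_left
    (deriv U w₀)).trans_isBigO hsq
  have hsummand₂ := ((((hε₂.mul_const (deriv (deriv U) w₀)).div_const 2).isBigO_one ℝ).mul_isLittleO
    (hRhpos.sub hRhneg)).trans_isBigO (by simpa using hsq)
  have hsummand₃ := (hAM.mul_isLittleO hRUpos).trans_isBigO hmul
  have hsummand₄ := (hMB.mul_isLittleO hRUneg).trans_isBigO hmul
  exact ((hsummand₁.add hsummand₂).add hsummand₃).add hsummand₄

theorem isLittleO_of_indifference_expansion {k₁ k₂ u₁ u₂ : ℝ} (hk₁ : k₁ ≠ 0) (hu₁ : u₁ ≠ 0)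
    (hε₁ : Tendsto ε₁ l (𝓝 0)) (hε₂_nonneg : ∀ᶠ a in l, 0 ≤ ε₂ a)
    (hν : ∀ᶠ a in l, |ν a| ≤ ε₁ a)
    (h : (fun a => 2 * k₁ * u₁ * ν a + ε₁ a * ε₂ a * k₁ * u₂ + ε₁ a ^ 2 * u₁ * k₂
        - u₁ * k₂ * ν a ^ 2) =o[l] fun a => ε₁ a * ε₂ a + ε₁ a ^ 2) :
    (fun a => ν a - (-(1/2) * ε₁ a * ε₂ a * (u₂ / u₁) - (1/2) * ε₁ a ^ 2 * (k₂ / k₁)))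
      =o[l] fun a => ε₁ a * ε₂ a + ε₁ a ^ 2 := by
  have hε₁_nonneg : ∀ᶠ a in l, 0 ≤ ε₁ a := hν.mono fun a ha => (abs_nonneg _).trans ha
  obtain ⟨hmul, hsq⟩ := isBigO_mul_add_sq hε₁_nonneg hε₂_nonneg
  have hν0 : Tendsto ν l (𝓝 0) := squeeze_zero_norm' hν hε₁
  have hlead := (hmul.const_mul_left (-(1/2) * (u₂ / u₁))).add
    (hsq.const_mul_left (-(1/2) * (k₂ / k₁)))
  have hquad : (fun a => ν a - k₂ / (2 * k₁) * ν a ^ 2) =O[l]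
      fun a => ε₁ a * ε₂ a + ε₁ a ^ 2 :=
    ((h.isBigO.const_mul_left (1 / (2 * k₁ * u₁))).add hlead).congr_left fun a => by
      field_simp
      ring
  have hνsq : (fun a => ν a ^ 2) =o[l] fun a => ε₁ a * ε₂ a + ε₁ a ^ 2 :=
    ((hquad.of_sub_mul_sq hν0).mul_isLittleO ((isLittleO_one_iff ℝ).2 hν0)).congr
      (fun a => (sq (ν a)).symm) (fun a => mul_one _)
  refine ((h.const_mul_left (1 / (2 * k₁ * u₁))).add
    (hνsq.const_mul_left (k₂ / (2 * k₁)))).congr_left fun a => ?_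
  field_simp
  ring

end Expansion

theorem stmt_10_general (U h : ℝ → ℝ) (w₀ p₀ : ℝ)
    (hUC2 : ContDiffAt ℝ 2 U w₀) (hU' : 0 < deriv U w₀)
    (hhC2 : ContDiffAt ℝ 2 h p₀) (hh' : 0 < deriv h p₀)
    (μ : ℝ → ℝ → ℝ) (δ : ℝ) (hδ : 0 < δ)
    (hμbd : ∀ ε₁ ∈ Ioo (0:ℝ) δ, ∀ ε₂ ∈ Ioo (0:ℝ) δ, μ ε₁ ε₂ ∈ Icc (-ε₁) ε₁)
    (hμeq : ∀ ε₁ ∈ Ioo (0:ℝ) δ, ∀ ε₂ ∈ Ioo (0:ℝ) δ,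
      (h (p₀ + ε₁) - h (p₀ - ε₁)) * U w₀
        = (h (p₀ - μ ε₁ ε₂) - h (p₀ - ε₁)) * U (w₀ - ε₂)
          + (h (p₀ + ε₁) - h (p₀ - μ ε₁ ε₂)) * U (w₀ + ε₂)) :
    (fun p : ℝ × ℝ =>
        μ p.1 p.2 - (-(1/2) * p.1 * p.2 * (deriv (deriv U) w₀ / deriv U w₀)
          - (1/2) * p.1^2 * (deriv (deriv h) p₀ / deriv h p₀)))
      =o[nhdsWithin (0, 0) (Ioi (0:ℝ) ×ˢ Ioi (0:ℝ))]
        (fun p : ℝ × ℝ => p.1 * p.2 + p.1^2) := by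
  set l := 𝓝[Ioi (0:ℝ) ×ˢ Ioi (0:ℝ)] ((0:ℝ), (0:ℝ))
  have hbox : ∀ᶠ p in l, p.1 ∈ Ioo 0 δ ∧ p.2 ∈ Ioo 0 δ := by
    filter_upwards [self_mem_nhdsWithin,
      nhdsWithin_le_nhds (prod_mem_nhds (Iio_mem_nhds hδ) (Iio_mem_nhds hδ))]
      with p ⟨h₁, h₂⟩ ⟨h₃, h₄⟩ using ⟨⟨h₁, h₃⟩, ⟨h₂, h₄⟩⟩
  have hfst : Tendsto Prod.fst l (𝓝 0) := continuousAt_fst.tendsto.mono_left nhdsWithin_le_nhds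
  have hsnd : Tendsto Prod.snd l (𝓝 0) := continuousAt_snd.tendsto.mono_left nhdsWithin_le_nhds
  have hsnd_nonneg : ∀ᶠ p in l, 0 ≤ p.2 := hbox.mono fun p hp => hp.2.1.le
  have hμ : ∀ᶠ p in l, |μ p.1 p.2| ≤ p.1 :=
    hbox.mono fun p hp => abs_le.2 (hμbd p.1 hp.1 p.2 hp.2)
  refine isLittleO_of_indifference_expansion hh'.ne' hU'.ne' hfst hsnd_nonneg hμ ?_
  refine (isLittleO_rduRemainder hUC2 hhC2 hfst hsnd hsnd_nonneg hμ).neg_left.congr' ?_ .rfl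
  filter_upwards [hbox] with p hp
  exact (indifference_eq_neg_rduRemainder hp.2.1.ne' (hμeq p.1 hp.1 p.2 hp.2)).symm

theorem stmt_10 (U h : ℝ → ℝ) (w₀ p₀ : ℝ) (hp₀ : p₀ ∈ Ioo (0:ℝ) 1)
    (hUC2 : ContDiffAt ℝ 2 U w₀) (hU' : 0 < deriv U w₀)
    (hhC2 : ContDiffAt ℝ 2 h p₀) (hh' : 0 < deriv h p₀)
    (μ : ℝ → ℝ → ℝ) (δ : ℝ) (hδ : 0 < δ)
    (hμbd : ∀ ε₁ ∈ Ioo (0:ℝ) δ, ∀ ε₂ ∈ Ioo (0:ℝ) δ, μ ε₁ ε₂ ∈ Icc (-ε₁) ε₁)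
    (hμeq : ∀ ε₁ ∈ Ioo (0:ℝ) δ, ∀ ε₂ ∈ Ioo (0:ℝ) δ,
      (h (p₀ + ε₁) - h (p₀ - ε₁)) * U w₀
        = (h (p₀ - μ ε₁ ε₂) - h (p₀ - ε₁)) * U (w₀ - ε₂)
          + (h (p₀ + ε₁) - h (p₀ - μ ε₁ ε₂)) * U (w₀ + ε₂)) :
    (fun p : ℝ × ℝ =>
        μ p.1 p.2 - (-(1/2) * p.1 * p.2 * (deriv (deriv U) w₀ / deriv U w₀)
          - (1/2) * p.1^2 * (deriv (deriv h) p₀ / deriv h p₀)))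
      =o[nhdsWithin (0, 0) (Ioi (0:ℝ) ×ˢ Ioi (0:ℝ))]
        (fun p : ℝ × ℝ => p.1 * p.2 + p.1^2) :=
  stmt_10_general U h w₀ p₀ hUC2 hU' hhC2 hh' μ δ hδ hμbd hμeq
end

section
/- Let U₁, U₂ : ℝ → ℝ be twice continuously differentiable with U₁' > 0, U₂' > 0, and suppose −U₂''(x)/U₂'(x) ≥ −U₁''(x)/U₁'(x) for all x. Then for all w < x: U₂'(x)/U₂'(w) ≤ U₁'(x)/U₁'(w), and for all w > x: U₂'(x)/U₂'(w) ≥ U₁'(x)/U₁'(w). -/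
/-! Writing `rᵢ = Uᵢ'`, the hypothesis says that the logarithmic derivative of `r₂` is at most
that of `r₁`, so the quotient `r₂ / r₁` is antitone. Comparing its values at `w` and `x` is the
claimed inequality between the ratios `rᵢ x / rᵢ w`. -/

theorem antitone_div_of_logDeriv_le {f g : ℝ → ℝ} (hf : Differentiable ℝ f)
    (hg : Differentiable ℝ g) (hf₀ : ∀ x, 0 < f x) (hg₀ : ∀ x, 0 < g x)
    (hfg : ∀ x, logDeriv f x ≤ logDeriv g x) : Antitone fun x => f x / g x := by
  have hderiv : ∀ x, HasDerivAt (fun x => f x / g x)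
      ((deriv f x * g x - f x * deriv g x) / g x ^ 2) x := fun x =>
    (hf x).hasDerivAt.div (hg x).hasDerivAt (hg₀ x).ne'
  refine antitone_of_deriv_nonpos (fun x => (hderiv x).differentiableAt) fun x => ?_
  rw [(hderiv x).deriv]
  have hcross : deriv f x * g x ≤ f x * deriv g x := by
    have := hfg x
    rwa [logDeriv_apply, logDeriv_apply, div_le_div_iff₀ (hf₀ x) (hg₀ x), mul_comm (deriv g x)] at this
  exact div_nonpos_of_nonpos_of_nonneg (by linarith) (sq_nonneg _)

theorem div_le_div_of_logDeriv_le {f g : ℝ → ℝ} (hf : Differentiable ℝ f)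
    (hg : Differentiable ℝ g) (hf₀ : ∀ x, 0 < f x) (hg₀ : ∀ x, 0 < g x)
    (hfg : ∀ x, logDeriv f x ≤ logDeriv g x) {w x : ℝ} (hwx : w ≤ x) :
    f x / f w ≤ g x / g w := by
  have := antitone_div_of_logDeriv_le hf hg hf₀ hg₀ hfg hwx
  rw [div_le_div_iff₀ (hg₀ x) (hg₀ w)] at this
  rw [div_le_div_iff₀ (hf₀ w) (hg₀ w)]
  linarith

theorem stmt_11 (U₁ U₂ : ℝ → ℝ)
    (hC2₁ : ContDiff ℝ 2 U₁) (hC2₂ : ContDiff ℝ 2 U₂)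
    (hU₁' : ∀ x, 0 < deriv U₁ x) (hU₂' : ∀ x, 0 < deriv U₂ x)
    (hcomp : ∀ x, -(deriv (deriv U₁) x) / deriv U₁ x
      ≤ -(deriv (deriv U₂) x) / deriv U₂ x) :
    (∀ w x : ℝ, w < x → deriv U₂ x / deriv U₂ w ≤ deriv U₁ x / deriv U₁ w) ∧
    (∀ w x : ℝ, x < w → deriv U₁ x / deriv U₁ w ≤ deriv U₂ x / deriv U₂ w) := by
  have hlog : ∀ x, logDeriv (deriv U₂) x ≤ logDeriv (deriv U₁) x := fun x => by
    simpa only [logDeriv_apply, neg_div, neg_le_neg_iff] using hcomp x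
  have hratio {w x : ℝ} (hwx : w ≤ x) :
      deriv U₂ x / deriv U₂ w ≤ deriv U₁ x / deriv U₁ w :=
    div_le_div_of_logDeriv_le hC2₂.differentiable_deriv_two hC2₁.differentiable_deriv_two
      hU₂' hU₁' hlog hwx
  refine ⟨fun w x hwx => hratio hwx.le, fun w x hxw => ?_⟩
  have := hratio hxw.le
  rwa [← inv_div (deriv U₂ x), ← inv_div (deriv U₁ x),
    inv_le_inv₀ (div_pos (hU₂' x) (hU₂' w)) (div_pos (hU₁' x) (hU₁' w))] at this
end

section
/- Let U₁, U₂ : ℝ → ℝ be twice continuously differentiable with U₁' > 0, U₂' > 0. Then −U₂''(x)/U₂'(x) ≥ −U₁''(x)/U₁'(x) for all x if and only if for all v < w ≤ x < y: (U₂(y)−U₂(x))/(U₂(w)−U₂(v)) ≤ (U₁(y)−U₁(x))/(U₁(w)−U₁(v)). -/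
/-!
Both conditions say that `r = U₂' / U₁'` is antitone. The Arrow–Pratt comparison is `r' ≤ 0`
by the quotient rule. By Cauchy's mean value theorem `(U₂ b - U₂ a) / (U₁ b - U₁ a)` is a value
of `r` on `(a, b)`, so an antitone `r` yields the increment inequality (after cross-multiplying);
conversely, shrinking the intervals `[a, a + t]` and `[b, b + t]` to their left endpoints turns
the increment inequality into `r b ≤ r a`.
-/

open Filter Set Topology

lemma div_le_div_iff_div_le_div {α : Type*} [Field α] [LinearOrder α] [IsStrictOrderedRing α]
    {a b c d : α} (hb : 0 < b) (hc : 0 < c) (hd : 0 < d) :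
    a / b ≤ c / d ↔ a / c ≤ b / d := by
  rw [div_le_div_iff₀ hb hd, div_le_div_iff₀ hc hd, mul_comm c b]

lemma neg_deriv_div_le_iff_deriv_div_nonpos {f g : ℝ → ℝ} {x : ℝ}
    (hf : DifferentiableAt ℝ f x) (hg : DifferentiableAt ℝ g x) (hfx : 0 < f x) (hgx : 0 < g x) :
    -deriv g x / g x ≤ -deriv f x / f x ↔ deriv (fun y => f y / g y) x ≤ 0 := by
  rw [deriv_fun_div hf hg hgx.ne', div_le_iff₀ (pow_pos hgx 2), zero_mul, sub_nonpos,
    div_le_div_iff₀ hgx hfx]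
  constructor <;> intro h <;> linarith

lemma HasDerivAt.tendsto_sub_div_sub {𝕜 : Type*} [NontriviallyNormedField 𝕜] {U₁ U₂ : 𝕜 → 𝕜}
    {d₁ d₂ a : 𝕜} (h₁ : HasDerivAt U₁ d₁ a) (h₂ : HasDerivAt U₂ d₂ a) (hd₁ : d₁ ≠ 0) :
    Tendsto (fun t => (U₂ (a + t) - U₂ a) / (U₁ (a + t) - U₁ a)) (𝓝[≠] 0) (𝓝 (d₂ / d₁)) := by
  refine ((hasDerivAt_iff_tendsto_slope_zero.mp h₂).div
    (hasDerivAt_iff_tendsto_slope_zero.mp h₁) hd₁).congr' ?_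
  filter_upwards [self_mem_nhdsWithin] with t ht
  simp only [Pi.div_apply, smul_eq_mul]
  rw [mul_div_mul_left _ _ (inv_ne_zero ht)]

section IncrementRatio

variable {U₁ U₂ : ℝ → ℝ}

lemma exists_mem_Ioo_sub_div_sub_eq_deriv_div (h₁ : Differentiable ℝ U₁)
    (h₂ : Differentiable ℝ U₂) (hU₁' : ∀ x, 0 < deriv U₁ x) {a b : ℝ} (hab : a < b) :
    ∃ c ∈ Ioo a b, (U₂ b - U₂ a) / (U₁ b - U₁ a) = deriv U₂ c / deriv U₁ c := by
  obtain ⟨c, hc, h⟩ := exists_ratio_deriv_eq_ratio_slope U₁ hab h₁.continuous.continuousOn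
    (fun x _ => (h₁ x).differentiableWithinAt) U₂ h₂.continuous.continuousOn
    (fun x _ => (h₂ x).differentiableWithinAt)
  have hU₁ : 0 < U₁ b - U₁ a := sub_pos.mpr (strictMono_of_deriv_pos hU₁' hab)
  refine ⟨c, hc, ?_⟩
  rw [div_eq_div_iff hU₁.ne' (hU₁' c).ne']
  linarith

lemma sub_div_sub_le_of_antitone (h₁ : Differentiable ℝ U₁) (h₂ : Differentiable ℝ U₂)
    (hU₁' : ∀ x, 0 < deriv U₁ x) (hr : Antitone fun x => deriv U₂ x / deriv U₁ x)
    {v w x y : ℝ} (hvw : v < w) (hwx : w ≤ x) (hxy : x < y) :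
    (U₂ y - U₂ x) / (U₁ y - U₁ x) ≤ (U₂ w - U₂ v) / (U₁ w - U₁ v) := by
  obtain ⟨c, hc, hc_eq⟩ := exists_mem_Ioo_sub_div_sub_eq_deriv_div h₁ h₂ hU₁' hvw
  obtain ⟨d, hd, hd_eq⟩ := exists_mem_Ioo_sub_div_sub_eq_deriv_div h₁ h₂ hU₁' hxy
  rw [hc_eq, hd_eq]
  exact hr (hc.2.le.trans (hwx.trans hd.1.le))

lemma antitone_of_sub_div_sub_le (h₁ : Differentiable ℝ U₁) (h₂ : Differentiable ℝ U₂)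
    (hU₁' : ∀ x, deriv U₁ x ≠ 0)
    (h : ∀ v w x y : ℝ, v < w → w ≤ x → x < y →
      (U₂ y - U₂ x) / (U₁ y - U₁ x) ≤ (U₂ w - U₂ v) / (U₁ w - U₁ v)) :
    Antitone fun x => deriv U₂ x / deriv U₁ x := by
  intro a b hab
  rcases hab.eq_or_lt with rfl | hab
  · rfl
  have hlim : ∀ z, Tendsto (fun t => (U₂ (z + t) - U₂ z) / (U₁ (z + t) - U₁ z)) (𝓝[>] 0)
      (𝓝 (deriv U₂ z / deriv U₁ z)) := fun z =>
    ((h₁ z).hasDerivAt.tendsto_sub_div_sub (h₂ z).hasDerivAt (hU₁' z)).mono_left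
      (nhdsWithin_mono _ fun t ht => ne_of_gt ht)
  refine le_of_tendsto_of_tendsto (hlim b) (hlim a) ?_
  filter_upwards [Ioo_mem_nhdsGT (sub_pos.mpr hab)] with t ht
  exact h a (a + t) b (b + t) (by linarith [ht.1]) (by linarith [ht.2]) (by linarith [ht.1])

lemma antitone_deriv_div_iff (h₁ : Differentiable ℝ U₁) (h₂ : Differentiable ℝ U₂)
    (hU₁' : ∀ x, 0 < deriv U₁ x) :
    (Antitone fun x => deriv U₂ x / deriv U₁ x) ↔ ∀ v w x y : ℝ, v < w → w ≤ x → x < y →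
      (U₂ y - U₂ x) / (U₁ y - U₁ x) ≤ (U₂ w - U₂ v) / (U₁ w - U₁ v) :=
  ⟨fun hr _ _ _ _ => sub_div_sub_le_of_antitone h₁ h₂ hU₁' hr,
    antitone_of_sub_div_sub_le h₁ h₂ fun x => (hU₁' x).ne'⟩

end IncrementRatio

theorem stmt_12 (U₁ U₂ : ℝ → ℝ)
    (hC2₁ : ContDiff ℝ 2 U₁) (hC2₂ : ContDiff ℝ 2 U₂)
    (hU₁' : ∀ x, 0 < deriv U₁ x) (hU₂' : ∀ x, 0 < deriv U₂ x) :
    (∀ x, -(deriv (deriv U₁) x) / deriv U₁ x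
        ≤ -(deriv (deriv U₂) x) / deriv U₂ x) ↔
    (∀ v w x y : ℝ, v < w → w ≤ x → x < y →
      (U₂ y - U₂ x) / (U₂ w - U₂ v) ≤ (U₁ y - U₁ x) / (U₁ w - U₁ v)) := by
  have hd₁ := hC2₁.differentiable_deriv_two
  have hd₂ := hC2₂.differentiable_deriv_two
  have hr : Differentiable ℝ fun x => deriv U₂ x / deriv U₁ x :=
    hd₂.div hd₁ fun x => (hU₁' x).ne'
  calc (∀ x, -(deriv (deriv U₁) x) / deriv U₁ x ≤ -(deriv (deriv U₂) x) / deriv U₂ x)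
      ↔ ∀ x, deriv (fun x => deriv U₂ x / deriv U₁ x) x ≤ 0 := forall_congr' fun x =>
        neg_deriv_div_le_iff_deriv_div_nonpos (hd₂ x) (hd₁ x) (hU₂' x) (hU₁' x)
    _ ↔ Antitone fun x => deriv U₂ x / deriv U₁ x :=
        ⟨antitone_of_deriv_nonpos hr, fun h _ => h.deriv_nonpos⟩
    _ ↔ _ := antitone_deriv_div_iff (hC2₁.differentiable two_ne_zero)
        (hC2₂.differentiable two_ne_zero) hU₁'
    _ ↔ _ := by
      refine forall₄_congr fun v w x y => forall₃_congr fun hvw _ hxy => ?_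
      have hU₁ := strictMono_of_deriv_pos hU₁'
      exact (div_le_div_iff_div_le_div (sub_pos.2 (strictMono_of_deriv_pos hU₂' hvw))
        (sub_pos.2 (hU₁ hxy)) (sub_pos.2 (hU₁ hvw))).symm
end

section
/- Let U₁, U₂ be twice continuously differentiable with U₁', U₂' > 0. Then −U₂''(x)/U₂'(x) ≥ −U₁''(x)/U₁'(x) for all x if and only if there exists a twice differentiable function φ with φ' > 0 and φ'' ≤ 0 on the range of U₁ such that U₂ = φ ∘ U₁. -/
/-!
Write `A U = -U''/U'` for the Arrow–Pratt coefficient. The chain rule for second derivatives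
gives `A (φ ∘ U) = (A φ ∘ U) · U' + A U` whenever `φ' ∘ U` and `U'` do not vanish. If `φ' > 0` and
`φ'' ≤ 0` then `A φ ≥ 0`, so `A (φ ∘ U₁) ≥ A U₁`. Conversely, `U₁` is a local diffeomorphism, so
`φ = U₂ ∘ U₁⁻¹` is twice differentiable on the open set `range U₁` with `φ' = U₂'/U₁' > 0`, and
the same identity shows `A φ ∘ U₁ = (A U₂ - A U₁) / U₁' ≥ 0`, i.e. `φ'' ≤ 0`.
-/

open Filter Set Function
open scoped Topology

section Calculus

variable {𝕜 : Type*} [NontriviallyNormedField 𝕜]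

theorem deriv_deriv_comp {φ U : 𝕜 → 𝕜} {x : 𝕜}
    (hφ : ∀ᶠ z in 𝓝 x, DifferentiableAt 𝕜 φ (U z)) (hU : ∀ᶠ z in 𝓝 x, DifferentiableAt 𝕜 U z)
    (hφ' : DifferentiableAt 𝕜 (deriv φ) (U x)) (hU' : DifferentiableAt 𝕜 (deriv U) x) :
    deriv (deriv (φ ∘ U)) x =
      deriv (deriv φ) (U x) * deriv U x ^ 2 + deriv φ (U x) * deriv (deriv U) x := by
  have hchain : deriv (φ ∘ U) =ᶠ[𝓝 x] fun z => deriv φ (U z) * deriv U z := by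
    filter_upwards [hφ, hU] with z hφz hUz using deriv_comp z hφz hUz
  have hprod : HasDerivAt (fun z => deriv φ (U z) * deriv U z)
      (deriv (deriv φ) (U x) * deriv U x * deriv U x + deriv φ (U x) * deriv (deriv U) x) x :=
    (hφ'.hasDerivAt.comp x hU.self_of_nhds.hasDerivAt).mul hU'.hasDerivAt
  rw [hchain.deriv_eq, hprod.deriv]
  ring

theorem HasDerivAt.comp_of_eventually_leftInverse [CompleteSpace 𝕜] {f g h : 𝕜 → 𝕜}
    {f' h' x : 𝕜} (hh : HasDerivAt h h' x) (hf : HasStrictDerivAt f f' x) (hf' : f' ≠ 0)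
    (hgf : ∀ᶠ y in 𝓝 x, g (f y) = y) : HasDerivAt (h ∘ g) (h' / f') (f x) := by
  have hg := (hf.to_local_left_inverse hf' hgf).hasDerivAt
  rw [← hgf.self_of_nhds] at hh
  simpa [div_eq_mul_inv] using hh.comp (f x) hg

variable [CompleteSpace 𝕜] {U V g : 𝕜 → 𝕜}

theorem deriv_comp_leftInverse_eventuallyEq (hU : ∀ x, HasStrictDerivAt U (deriv U x) x)
    (hU0 : ∀ x, deriv U x ≠ 0) (hg : LeftInverse g U) (hV : Differentiable 𝕜 V) (x : 𝕜) :
    deriv (V ∘ g) =ᶠ[𝓝 (U x)] fun y => deriv V (g y) / deriv U (g y) := by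
  have hrange : range U ∈ 𝓝 (U x) :=
    (isOpenMap_of_hasStrictDerivAt hU hU0).isOpen_range.mem_nhds (mem_range_self x)
  filter_upwards [hrange]
  rintro _ ⟨w, rfl⟩
  rw [hg w]
  exact ((hV w).hasDerivAt.comp_of_eventually_leftInverse (hU w) (hU0 w)
    (Eventually.of_forall hg)).deriv

theorem differentiableAt_deriv_comp_leftInverse (hU : ∀ x, HasStrictDerivAt U (deriv U x) x)
    (hU0 : ∀ x, deriv U x ≠ 0) (hg : LeftInverse g U) (hV : Differentiable 𝕜 V) {x : 𝕜}
    (hdU : DifferentiableAt 𝕜 (deriv U) x) (hdV : DifferentiableAt 𝕜 (deriv V) x) :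
    DifferentiableAt 𝕜 (deriv (V ∘ g)) (U x) :=
  ((hdV.div hdU (hU0 x)).hasDerivAt.comp_of_eventually_leftInverse (hU x) (hU0 x)
    (Eventually.of_forall hg)).differentiableAt.congr_of_eventuallyEq
    (deriv_comp_leftInverse_eventuallyEq hU hU0 hg hV x)

end Calculus

noncomputable def arrowPratt (U : ℝ → ℝ) (x : ℝ) : ℝ :=
  -(deriv (deriv U) x) / deriv U x

theorem arrowPratt_nonneg_iff {U : ℝ → ℝ} {x : ℝ} (hU : 0 < deriv U x) :
    0 ≤ arrowPratt U x ↔ deriv (deriv U) x ≤ 0 := by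
  rw [arrowPratt, le_div_iff₀ hU, zero_mul, neg_nonneg]

theorem arrowPratt_comp {φ U : ℝ → ℝ} {x : ℝ}
    (hφ : ∀ᶠ z in 𝓝 x, DifferentiableAt ℝ φ (U z)) (hU : ∀ᶠ z in 𝓝 x, DifferentiableAt ℝ U z)
    (hφ' : DifferentiableAt ℝ (deriv φ) (U x)) (hU' : DifferentiableAt ℝ (deriv U) x)
    (hφ0 : deriv φ (U x) ≠ 0) (hU0 : deriv U x ≠ 0) :
    arrowPratt (φ ∘ U) x = arrowPratt φ (U x) * deriv U x + arrowPratt U x := by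
  simp only [arrowPratt, deriv_deriv_comp hφ hU hφ' hU',
    deriv_comp x hφ.self_of_nhds hU.self_of_nhds]
  field_simp
  ring

theorem arrowPratt_le_comp {φ U : ℝ → ℝ} {x : ℝ} (hU : Differentiable ℝ U)
    (hφ : ∀ z, DifferentiableAt ℝ φ (U z)) (hdφ : DifferentiableAt ℝ (deriv φ) (U x))
    (hdU : DifferentiableAt ℝ (deriv U) x) (hφ' : 0 < deriv φ (U x)) (hU' : 0 < deriv U x)
    (hφ'' : deriv (deriv φ) (U x) ≤ 0) :
    arrowPratt U x ≤ arrowPratt (φ ∘ U) x := by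
  rw [arrowPratt_comp (.of_forall hφ) (.of_forall hU) hdφ hdU hφ'.ne' hU'.ne']
  exact le_add_of_nonneg_left (mul_nonneg ((arrowPratt_nonneg_iff hφ').2 hφ'') hU'.le)

theorem concave_comp_leftInverse_of_arrowPratt_le {U₁ U₂ g : ℝ → ℝ}
    (hC2₁ : ContDiff ℝ 2 U₁) (hC2₂ : ContDiff ℝ 2 U₂)
    (hU₁' : ∀ x, 0 < deriv U₁ x) (hU₂' : ∀ x, 0 < deriv U₂ x) (hg : LeftInverse g U₁)
    (hAP : ∀ x, arrowPratt U₁ x ≤ arrowPratt U₂ x) (x : ℝ) :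
    DifferentiableAt ℝ (U₂ ∘ g) (U₁ x) ∧ DifferentiableAt ℝ (deriv (U₂ ∘ g)) (U₁ x) ∧
      0 < deriv (U₂ ∘ g) (U₁ x) ∧ deriv (deriv (U₂ ∘ g)) (U₁ x) ≤ 0 := by
  have hstrict₁ : ∀ x, HasStrictDerivAt U₁ (deriv U₁ x) x := fun x =>
    hC2₁.contDiffAt.hasStrictDerivAt two_ne_zero
  have hφ : ∀ x, HasDerivAt (U₂ ∘ g) (deriv U₂ x / deriv U₁ x) (U₁ x) := fun x =>
    (hC2₂.differentiable two_ne_zero x).hasDerivAt.comp_of_eventually_leftInverse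
      (hstrict₁ x) (hU₁' x).ne' (.of_forall hg)
  have hdφ : DifferentiableAt ℝ (deriv (U₂ ∘ g)) (U₁ x) :=
    differentiableAt_deriv_comp_leftInverse hstrict₁ (fun x => (hU₁' x).ne') hg
      (hC2₂.differentiable two_ne_zero) (hC2₁.differentiable_deriv_two x)
      (hC2₂.differentiable_deriv_two x)
  have hφ' : 0 < deriv (U₂ ∘ g) (U₁ x) := (hφ x).deriv ▸ div_pos (hU₂' x) (hU₁' x)
  refine ⟨(hφ x).differentiableAt, hdφ, hφ', (arrowPratt_nonneg_iff hφ').1 ?_⟩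
  have hcomp := arrowPratt_comp (.of_forall fun z => (hφ z).differentiableAt)
    (.of_forall (hC2₁.differentiable two_ne_zero)) hdφ (hC2₁.differentiable_deriv_two x)
    hφ'.ne' (hU₁' x).ne'
  rw [comp_assoc, hg.comp_eq_id, comp_id] at hcomp
  exact nonneg_of_mul_nonneg_left (by linarith [hAP x]) (hU₁' x)

theorem stmt_14 (U₁ U₂ : ℝ → ℝ)
    (hC2₁ : ContDiff ℝ 2 U₁) (hC2₂ : ContDiff ℝ 2 U₂)
    (hU₁' : ∀ x, 0 < deriv U₁ x) (hU₂' : ∀ x, 0 < deriv U₂ x) :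
    (∀ x, -(deriv (deriv U₁) x) / deriv U₁ x
        ≤ -(deriv (deriv U₂) x) / deriv U₂ x) ↔
    (∃ φ : ℝ → ℝ,
      (∀ y ∈ Set.range U₁,
        DifferentiableAt ℝ φ y ∧ DifferentiableAt ℝ (deriv φ) y ∧
        0 < deriv φ y ∧ deriv (deriv φ) y ≤ 0) ∧
      U₂ = φ ∘ U₁) := by
  change (∀ x, arrowPratt U₁ x ≤ arrowPratt U₂ x) ↔ _
  constructor
  · intro hAP
    have hg := leftInverse_invFun (strictMono_of_deriv_pos hU₁').injective
    refine ⟨U₂ ∘ invFun U₁, ?_, by rw [comp_assoc, hg.comp_eq_id, comp_id]⟩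
    rintro _ ⟨x, rfl⟩
    exact concave_comp_leftInverse_of_arrowPratt_le hC2₁ hC2₂ hU₁' hU₂' hg hAP x
  · rintro ⟨φ, hφ, rfl⟩ x
    obtain ⟨-, hdφ, hφ', hφ''⟩ := hφ _ (mem_range_self x)
    exact arrowPratt_le_comp (hC2₁.differentiable two_ne_zero)
      (fun z => (hφ _ (mem_range_self z)).1) hdφ (hC2₁.differentiable_deriv_two x) hφ'
      (hU₁' x) hφ''
end

section
/- Let h₁, h₂ : [0,1] → [0,1] be twice continuously differentiable, strictly increasing, with hᵢ(0)=0, hᵢ(1)=1 and hᵢ' > 0, and suppose −h₂''(p)/h₂'(p) ≥ −h₁''(p)/h₁'(p) for all p ∈ (0,1). Then for every p₀ ∈ (0,1) and every 0 < ε₁ ≤ min(p₀, 1−p₀), the premiums μᵢ defined by hᵢ(p₀−ε₁) − 2hᵢ(p₀−μᵢ) + hᵢ(p₀+ε₁) = 0 satisfy μ₂ ≥ μ₁. -/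
open Set

/-!
Write `r = h₂' / h₁'`. The comparison of the local indices says exactly that `(log r)' ≤ 0`, so `r`
is antitone. Put `a = p₀ - ε₁`, `b = p₀ + ε₁`, let `x = p₀ - μ₂` be the point where `h₂` takes the
midpoint value of `h₂ a` and `h₂ b`, and let `c = r x`. Since `h₂' ≤ c h₁'` to the right of `x` and `h₂' ≥ c h₁'` to its left, integrating gives
`c (h₁ x - h₁ a) ≤ h₂ x - h₂ a = h₂ b - h₂ x ≤ c (h₁ b - h₁ x)`, i.e. `h₁ x` lies below the midpoint
value `h₁ (p₀ - μ₁)`, whence `p₀ - μ₂ ≤ p₀ - μ₁`.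
-/

section

variable {f g : ℝ → ℝ}

theorem antitoneOn_deriv_div_deriv {s : Set ℝ} (hs : Convex ℝ s) (hso : IsOpen s)
    (hf : DifferentiableOn ℝ (deriv f) s) (hg : DifferentiableOn ℝ (deriv g) s)
    (hf' : ∀ t ∈ s, 0 < deriv f t) (hg' : ∀ t ∈ s, 0 < deriv g t)
    (hcomp : ∀ t ∈ s, -deriv (deriv f) t / deriv f t ≤ -deriv (deriv g) t / deriv g t) :
    AntitoneOn (fun t => deriv g t / deriv f t) s := by
  have hquot : DifferentiableOn ℝ (fun t => deriv g t / deriv f t) s :=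
    hg.div hf fun t ht => (hf' t ht).ne'
  refine antitoneOn_of_deriv_nonpos hs hquot.continuousOn (by rwa [hso.interior_eq]) fun t ht => ?_
  rw [hso.interior_eq] at ht
  have hft := hf' t ht
  have hgt := hg' t ht
  have hcross := hcomp t ht
  rw [div_le_div_iff₀ hft hgt] at hcross
  have hquot' : HasDerivAt (fun t => deriv g t / deriv f t)
      ((deriv (deriv g) t * deriv f t - deriv g t * deriv (deriv f) t) / deriv f t ^ 2) t :=
    (hg.differentiableAt (hso.mem_nhds ht)).hasDerivAt.div
      (hf.differentiableAt (hso.mem_nhds ht)).hasDerivAt hft.ne'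
  rw [hquot'.deriv]
  exact div_nonpos_of_nonpos_of_nonneg (by nlinarith) (sq_nonneg _)

theorem sub_le_sub_of_deriv_le {u v : ℝ} (huv : u ≤ v)
    (hfc : ContinuousOn f (Icc u v)) (hgc : ContinuousOn g (Icc u v))
    (hfd : DifferentiableOn ℝ f (Ioo u v)) (hgd : DifferentiableOn ℝ g (Ioo u v))
    (hle : ∀ t ∈ Ioo u v, deriv g t ≤ deriv f t) :
    g v - g u ≤ f v - f u := by
  have hmono : MonotoneOn (f - g) (Icc u v) := by
    refine monotoneOn_of_deriv_nonneg (convex_Icc u v) (hfc.sub hgc)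
      (by rw [interior_Icc]; exact hfd.sub hgd) fun t ht => ?_
    rw [interior_Icc] at ht
    rw [deriv_sub (hfd.differentiableAt (isOpen_Ioo.mem_nhds ht))
      (hgd.differentiableAt (isOpen_Ioo.mem_nhds ht)), sub_nonneg]
    exact hle t ht
  have := hmono (left_mem_Icc.2 huv) (right_mem_Icc.2 huv) huv
  simp only [Pi.sub_apply] at this
  linarith

theorem two_mul_le_add_of_antitoneOn_deriv_div {a x b : ℝ}
    (hf : Differentiable ℝ f) (hg : Differentiable ℝ g)
    (hf' : ∀ t ∈ Ioo a b, 0 < deriv f t) (hgx : 0 < deriv g x)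
    (hr : AntitoneOn (fun t => deriv g t / deriv f t) (Ioo a b)) (hx : x ∈ Ioo a b)
    (hmid : 2 * g x = g a + g b) :
    2 * f x ≤ f a + f b := by
  set c := deriv g x / deriv f x
  have hc : 0 < c := div_pos hgx (hf' x hx)
  have hcf : Differentiable ℝ (fun t => c * f t) := hf.const_mul c
  have hderiv : ∀ t, deriv (fun t => c * f t) t = c * deriv f t := fun t =>
    deriv_const_mul c (hf t)
  have hright : g b - g x ≤ c * f b - c * f x := by
    refine sub_le_sub_of_deriv_le hx.2.le hcf.continuous.continuousOn hg.continuous.continuousOn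
      hcf.differentiableOn hg.differentiableOn fun t ht => ?_
    have htab : t ∈ Ioo a b := ⟨hx.1.trans ht.1, ht.2⟩
    rw [hderiv, ← div_le_iff₀ (hf' t htab)]
    exact hr hx htab ht.1.le
  have hleft : c * f x - c * f a ≤ g x - g a := by
    refine sub_le_sub_of_deriv_le hx.1.le hg.continuous.continuousOn hcf.continuous.continuousOn
      hg.differentiableOn hcf.differentiableOn fun t ht => ?_
    have htab : t ∈ Ioo a b := ⟨ht.1, ht.2.trans hx.2⟩
    rw [hderiv, ← le_div_iff₀ (hf' t htab)]
    exact hr htab hx ht.2.le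
  exact le_of_mul_le_mul_left (by linarith : c * (2 * f x) ≤ c * (f a + f b)) hc

theorem StrictMonoOn.mem_Ioo_of_two_mul_eq_add {s : Set ℝ} {a x b : ℝ}
    (hg : StrictMonoOn g s) (ha : a ∈ s) (hx : x ∈ s) (hb : b ∈ s) (hab : a < b)
    (hmid : 2 * g x = g a + g b) : x ∈ Ioo a b := by
  have := hg ha hb hab
  exact ⟨(hg.lt_iff_lt ha hx).1 (by linarith), (hg.lt_iff_lt hx hb).1 (by linarith)⟩

end

theorem stmt_17_general (h₁ h₂ : ℝ → ℝ)
    (hC2₁ : ContDiff ℝ 2 h₁) (hC2₂ : ContDiff ℝ 2 h₂)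
    (hmono₁ : StrictMonoOn h₁ (Icc 0 1)) (hmono₂ : StrictMonoOn h₂ (Icc 0 1))
    (hd₁ : ∀ p ∈ Ioo (0:ℝ) 1, 0 < deriv h₁ p)
    (hd₂ : ∀ p ∈ Ioo (0:ℝ) 1, 0 < deriv h₂ p)
    (hcomp : ∀ p ∈ Ioo (0:ℝ) 1,
      -(deriv (deriv h₁) p) / deriv h₁ p ≤ -(deriv (deriv h₂) p) / deriv h₂ p) :
    ∀ p₀ ∈ Ioo (0:ℝ) 1, ∀ ε₁ : ℝ, 0 < ε₁ → ε₁ ≤ min p₀ (1 - p₀) →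
      ∀ μ₁ ∈ Icc (-ε₁) ε₁, ∀ μ₂ ∈ Icc (-ε₁) ε₁,
        h₁ (p₀ - ε₁) - 2 * h₁ (p₀ - μ₁) + h₁ (p₀ + ε₁) = 0 →
        h₂ (p₀ - ε₁) - 2 * h₂ (p₀ - μ₂) + h₂ (p₀ + ε₁) = 0 →
        μ₁ ≤ μ₂ := by
  intro p₀ _ ε₁ hε₁ hεle μ₁ hμ₁ μ₂ hμ₂ eq₁ eq₂
  obtain ⟨hεp₀, hε1p₀⟩ := le_min_iff.1 hεle
  have mem : ∀ μ ∈ Icc (-ε₁) ε₁, p₀ - μ ∈ Icc (0:ℝ) 1 := fun μ hμ =>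
    ⟨by linarith [hμ.2], by linarith [hμ.1]⟩
  have ha : p₀ - ε₁ ∈ Icc (0:ℝ) 1 := ⟨by linarith, by linarith⟩
  have hb : p₀ + ε₁ ∈ Icc (0:ℝ) 1 := ⟨by linarith, by linarith⟩
  have hx := hmono₂.mem_Ioo_of_two_mul_eq_add ha (mem μ₂ hμ₂) hb (by linarith) (by linarith)
  have hsub : Ioo (p₀ - ε₁) (p₀ + ε₁) ⊆ Ioo 0 1 := Ioo_subset_Ioo ha.1 hb.2
  have hratio := antitoneOn_deriv_div_deriv (convex_Ioo 0 1) isOpen_Ioo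
    hC2₁.differentiable_deriv_two.differentiableOn hC2₂.differentiable_deriv_two.differentiableOn
    hd₁ hd₂ hcomp
  have key := two_mul_le_add_of_antitoneOn_deriv_div (hC2₁.differentiable two_ne_zero)
    (hC2₂.differentiable two_ne_zero) (fun t ht => hd₁ t (hsub ht)) (hd₂ _ (hsub hx))
    (hratio.mono hsub) hx (by linarith)
  have hxy := (hmono₁.le_iff_le (mem μ₂ hμ₂) (mem μ₁ hμ₁)).1 (by linarith)
  linarith

theorem stmt_17 (h₁ h₂ : ℝ → ℝ)
    (hC2₁ : ContDiff ℝ 2 h₁) (hC2₂ : ContDiff ℝ 2 h₂)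
    (hmono₁ : StrictMonoOn h₁ (Icc 0 1)) (hmono₂ : StrictMonoOn h₂ (Icc 0 1))
    (hmaps₁ : MapsTo h₁ (Icc 0 1) (Icc 0 1)) (hmaps₂ : MapsTo h₂ (Icc 0 1) (Icc 0 1))
    (h₁0 : h₁ 0 = 0) (h₁1 : h₁ 1 = 1) (h₂0 : h₂ 0 = 0) (h₂1 : h₂ 1 = 1)
    (hd₁ : ∀ p ∈ Ioo (0:ℝ) 1, 0 < deriv h₁ p)
    (hd₂ : ∀ p ∈ Ioo (0:ℝ) 1, 0 < deriv h₂ p)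
    (hcomp : ∀ p ∈ Ioo (0:ℝ) 1,
      -(deriv (deriv h₁) p) / deriv h₁ p ≤ -(deriv (deriv h₂) p) / deriv h₂ p) :
    ∀ p₀ ∈ Ioo (0:ℝ) 1, ∀ ε₁ : ℝ, 0 < ε₁ → ε₁ ≤ min p₀ (1 - p₀) →
      ∀ μ₁ ∈ Icc (-ε₁) ε₁, ∀ μ₂ ∈ Icc (-ε₁) ε₁,
        h₁ (p₀ - ε₁) - 2 * h₁ (p₀ - μ₁) + h₁ (p₀ + ε₁) = 0 →
        h₂ (p₀ - ε₁) - 2 * h₂ (p₀ - μ₂) + h₂ (p₀ + ε₁) = 0 →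
        μ₁ ≤ μ₂ :=
  stmt_17_general h₁ h₂ hC2₁ hC2₂ hmono₁ hmono₂ hd₁ hd₂ hcomp
end
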